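/- A permutation π of [n] avoids both dashed patterns 3-1-4-2 and 2-41-3 if and only if its reverse ρ = r(π) satisfies both: (a) ρ avoids the classical pattern 2-4-1-3, i.e., there are no indices i < j < k < ℓ with ρ_k < ρ_i < ρ_ℓ < ρ_j; and (b) ρ avoids the barred pattern 4-1-3̄-5-2, i.e., for every occurrence i < j < k < ℓ of the classical pattern 3-1-4-2 in ρ (that is, ρ_j < ρ_ℓ < ρ_i < ρ_k) there exists an index m with j < m < k and ρ_ℓ < ρ_m < ρ_i. -/

import Mathlib

/-
Common definitions: permutations of {1,…,n} as words (lists), dashed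
pattern avoidance, permutation statistics, and β(1,0)-trees with their
statistics, following the paper
"Decompositions and statistics for β(1,0)-trees and nonseparable permutations".
-/

namespace Beta10

attribute [local instance] Classical.propDecidable

/-- `l` is a permutation of `{1, …, n}` (written as a word). -/
def IsPermOf (n : ℕ) (l : List ℕ) : Prop := l.Perm (List.range' 1 n)

/-- an occurrence of the dashed pattern 3-1-4-2 at positions `i < j < k < m` -/
def occ3142 (l : List ℕ) (i j k m : ℕ) : Prop :=
  i < j ∧ j < k ∧ k < m ∧ m < l.length ∧
  l.getD j 0 < l.getD m 0 ∧ l.getD m 0 < l.getD i 0 ∧ l.getD i 0 < l.getD k 0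

def pat3142 (l : List ℕ) : Prop := ∃ i j k m, occ3142 l i j k m

/-- an occurrence of the dashed pattern 2-41-3 at positions `i < j, j+1 < k` -/
def occ2413 (l : List ℕ) (i j k : ℕ) : Prop :=
  i < j ∧ j + 1 < k ∧ k < l.length ∧
  l.getD (j+1) 0 < l.getD i 0 ∧ l.getD i 0 < l.getD k 0 ∧ l.getD k 0 < l.getD j 0

def pat2413 (l : List ℕ) : Prop := ∃ i j k, occ2413 l i j k

/-- an *avoider*: a permutation of `{1,…,n}` avoiding 3-1-4-2 and 2-41-3 -/
def Avoider (n : ℕ) (l : List ℕ) : Prop := IsPermOf n l ∧ ¬ pat3142 l ∧ ¬ pat2413 l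

/-- direct sum of permutations -/
def dsum (σ τ : List ℕ) : List ℕ := σ ++ τ.map (· + σ.length)

/-- a nonempty permutation that is not a direct sum of two nonempty permutations -/
def Indecomposable (l : List ℕ) : Prop :=
  l ≠ [] ∧ ¬ ∃ σ τ : List ℕ, σ ≠ [] ∧ τ ≠ [] ∧ l = dsum σ τ

/-- position `p` holds a left-to-right maximum of `l` -/
def IsLRMax (l : List ℕ) (p : ℕ) : Prop :=
  p < l.length ∧ ∀ j < p, l.getD j 0 < l.getD p 0

/-- position `p` holds a left-to-right minimum of `l` -/
def IsLRMin (l : List ℕ) (p : ℕ) : Prop :=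
  p < l.length ∧ ∀ j < p, l.getD p 0 < l.getD j 0

/-- position `p` holds a right-to-left maximum of `l` -/
def IsRLMax (l : List ℕ) (p : ℕ) : Prop :=
  p < l.length ∧ ∀ j < l.length, p < j → l.getD j 0 < l.getD p 0

/-- the number of left-to-right maxima -/
noncomputable def lmax (l : List ℕ) : ℕ :=
  ((Finset.range l.length).filter (fun p => IsLRMax l p)).card

/-- the number of left-to-right minima -/
noncomputable def lmin (l : List ℕ) : ℕ :=
  ((Finset.range l.length).filter (fun p => IsLRMin l p)).card

/-- the number of right-to-left maxima -/
noncomputable def rmax (l : List ℕ) : ℕ :=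
  ((Finset.range l.length).filter (fun p => IsRLMax l p)).card

/-- the number of ascents -/
noncomputable def asc (l : List ℕ) : ℕ :=
  ((Finset.range (l.length - 1)).filter (fun p => l.getD p 0 < l.getD (p+1) 0)).card

/-- the number of descents -/
noncomputable def des (l : List ℕ) : ℕ :=
  ((Finset.range (l.length - 1)).filter (fun p => l.getD (p+1) 0 < l.getD p 0)).card

/-- `ldr l` : the largest `i` with `a₁ > a₂ > ⋯ > aᵢ` (and `0` for the empty word) -/
noncomputable def ldr (l : List ℕ) : ℕ :=
  ((Finset.range (l.length + 1)).filter
    (fun i => ∀ j, j + 1 < i → l.getD (j+1) 0 < l.getD j 0)).sup id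

/-- `lir l` : the largest `i` with `a₁ < a₂ < ⋯ < aᵢ` (and `0` for the empty word) -/
noncomputable def lir (l : List ℕ) : ℕ :=
  ((Finset.range (l.length + 1)).filter
    (fun i => ∀ j, j + 1 < i → l.getD j 0 < l.getD (j+1) 0)).sup id

/-- the factor of `l` occupying positions `p, …, q-1` is a component of `l`:
it is nonempty, all letters before it are smaller, all letters after it are
larger, and it admits no nontrivial splitting `αβ` with `α ≺ β`. -/
def IsComponent (l : List ℕ) (p q : ℕ) : Prop :=
  p < q ∧ q ≤ l.length ∧
  (∀ i < p, ∀ j, p ≤ j → j < q → l.getD i 0 < l.getD j 0) ∧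
  (∀ j, p ≤ j → j < q → ∀ i, q ≤ i → i < l.length → l.getD j 0 < l.getD i 0) ∧
  ¬ ∃ r, p < r ∧ r < q ∧ ∀ i, p ≤ i → i < r → ∀ j, r ≤ j → j < q → l.getD i 0 < l.getD j 0

/-- the number of components of `l` -/
noncomputable def comp (l : List ℕ) : ℕ :=
  (((Finset.range (l.length + 1)) ×ˢ (Finset.range (l.length + 1))).filter
    (fun pq => IsComponent l pq.1 pq.2)).card

/-- insert the letter `a` into `l` so that it occupies (0-based) position `r` -/
def insertAt (l : List ℕ) (r : ℕ) (a : ℕ) : List ℕ := l.take r ++ a :: l.drop r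

/-- the (0-based) positions of the left-to-right maxima, from left to right -/
noncomputable def lrMaxPos (l : List ℕ) : List ℕ :=
  (List.range l.length).filter (fun p => decide (IsLRMax l p))

/-- the finite set of avoiders of `{1,…,n}` -/
noncomputable def avoidersFinset (n : ℕ) : Finset (List ℕ) :=
  ((List.range' 1 n).permutations.toFinset).filter (fun l => ¬ pat3142 l ∧ ¬ pat2413 l)

/-- reverse of a permutation -/
def revP (l : List ℕ) : List ℕ := l.reverse

/-- complement of a permutation of `{1,…,n}` -/
def complP (n : ℕ) (l : List ℕ) : List ℕ := l.map (fun a => n + 1 - a)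

/-- inverse of a permutation of `{1,…,n}` (as a word: the `v`-th letter is the
position of the letter `v` in `l`, 1-based) -/
def invP (l : List ℕ) : List ℕ :=
  (List.range' 1 l.length).map (fun v => l.idxOf v + 1)

/-- rooted plane trees with nodes labeled by natural numbers -/
inductive PTree : Type where
  | node : ℕ → List PTree → PTree

namespace PTree

/-- the label of the root -/
def label : PTree → ℕ | node l _ => l

/-- the list of subtrees of the root -/
def children : PTree → List PTree | node _ cs => cs

/-- the number of nodes -/
def size : PTree → ℕ
  | node _ cs => 1 + (cs.attach.map (fun x => size x.1)).sum
decreasing_by have := List.sizeOf_lt_of_mem x.2; simp at this ⊢; omega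

/-- the number of leaves -/
def leaves : PTree → ℕ
  | node _ [] => 1
  | node _ (c :: cs) => ((c :: cs).attach.map (fun x => leaves x.1)).sum
decreasing_by have := List.sizeOf_lt_of_mem x.2; simp at this ⊢; omega

/-- the number of internal (non-leaf) nodes; the root counts as internal -/
def internalN : PTree → ℕ
  | node _ [] => 0
  | node _ (c :: cs) => 1 + ((c :: cs).attach.map (fun x => internalN x.1)).sum
decreasing_by have := List.sizeOf_lt_of_mem x.2; simp at this ⊢; omega

/-- the number of children of the root -/
def subT (t : PTree) : ℕ := t.children.length

/-- the number of edges on the path from the root to the leftmost leaf -/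
def lpath : PTree → ℕ
  | node _ [] => 0
  | node _ (c :: _) => lpath c + 1

mutual
/-- the number of edges on the path from the root to the rightmost leaf -/
def rpath : PTree → ℕ
  | .node _ [] => 0
  | .node _ (c :: cs) => rpathAux c cs + 1
termination_by t => sizeOf t
def rpathAux : PTree → List PTree → ℕ
  | c, [] => rpath c
  | _, c' :: cs => rpathAux c' cs
termination_by c cs => sizeOf c + sizeOf cs
end

/-- the number of nodes with label 1, other than the root, on the path from
the root to the leftmost leaf -/
def lsub : PTree → ℕ
  | node _ [] => 0
  | node _ (c :: _) => lsub c + (if c.label = 1 then 1 else 0)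

mutual
/-- the number of nodes with label 1, other than the root, on the path from
the root to the rightmost leaf -/
def rsub : PTree → ℕ
  | .node _ [] => 0
  | .node _ (c :: cs) => rsubAux c cs
termination_by t => sizeOf t
def rsubAux : PTree → List PTree → ℕ
  | c, [] => rsub c + (if c.label = 1 then 1 else 0)
  | _, c' :: cs => rsubAux c' cs
termination_by c cs => sizeOf c + sizeOf cs
end

/-- the number of internal nodes common to the left path and the right path -/
def stem : PTree → ℕ
  | node _ [] => 0
  | node _ [c] => stem c + 1
  | node _ (_ :: _ :: _) => 1

/-- `tsum u v = u ⊕ v`: the subtrees of the root are those of `u` followed by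
those of `v`, and the root label is the sum of the root labels -/
def tsum (u v : PTree) : PTree := node (u.label + v.label) (u.children ++ v.children)

/-- `lam i t = λ(i, t)`: join a new root via an edge to the old root; both the
new root and the old root get the label `i` -/
def lam (i : ℕ) (t : PTree) : PTree := node i [node i t.children]

/-- the one-edge tree (two nodes, both labeled 1) -/
def edgeT : PTree := node 1 [node 1 []]

/-- `iterEdge k = ⊕^k edgeT`, the `k`-fold sum of one-edge trees -/
def iterEdge : ℕ → PTree
  | 0 => node 0 []
  | k + 1 => tsum edgeT (iterEdge k)

/-- does the path from the root to the leftmost leaf contain a node,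
other than the leaf itself, with label 1? -/
def leftPathOne : PTree → Bool
  | node _ [] => false
  | node l (c :: _) => (l == 1) || leftPathOne c

/-- delete the leftmost leaf and decrease by 1 the labels of all nodes on the
path from the root to it -/
def delLeft : PTree → PTree
  | node l [] => node l []
  | node l (node _ [] :: cs) => node (l - 1) cs
  | node l (c :: cs) => node (l - 1) (delLeft c :: cs)

/-- iterate: if the path from the root to the leftmost leaf contains a node
(other than that leaf) with label 1, stop and report 1 plus the number of
leaves already deleted; otherwise delete the leftmost leaf (decreasing the
labels on its path) and continue -/
def stemGo : ℕ → PTree → ℕ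
  | 0, _ => 0
  | fuel + 1, t => if leftPathOne t then 1 else 1 + stemGo fuel (delLeft t)

/-- the statistic stem′ of the paper: the index of the first leaf (from the
left) whose path to the root contains a node, other than the leaf itself,
with label 1, in the iterated leaf-deletion process -/
def stemP (t : PTree) : ℕ := stemGo t.size t

/-- the mirror image: recursively reverse the order of subtrees -/
def mirror : PTree → PTree
  | node l cs => node l ((cs.attach.map (fun x => mirror x.1)).reverse)
decreasing_by have := List.sizeOf_lt_of_mem x.2; simp at this ⊢; omega

/-- the statistic stem~ : stem′ of the mirror image -/
def stemM (t : PTree) : ℕ := stemP (mirror t)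

/-- `obs u v = u ⊘ v`: identify the rightmost leaf of `u` with the root of `v`;
the identified node gets label 1 -/
def obs : PTree → PTree → PTree
  | node _ [], v => node 1 v.children
  | node l [c], v => node l [obs c v]
  | node l (c :: c' :: cs), v => node l (c :: (obs (node l (c' :: cs)) v).children)
termination_by u _ => sizeOf u
decreasing_by all_goals (simp; try omega)

/-- validity of a non-root node of a β(1,0)-tree (together with all of its
descendants): a leaf has label 1, and any other node has a positive label
that is at most the sum of its children's labels -/
inductive IsBetaSub : PTree → Prop where
  | mk (l : ℕ) (cs : List PTree)
      (hleaf : cs = [] → l = 1)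
      (hinternal : cs ≠ [] → 1 ≤ l ∧ l ≤ (cs.map label).sum)
      (hchildren : ∀ c ∈ cs, IsBetaSub c) : IsBetaSub (node l cs)

end PTree

/-- `t` is a β(1,0)-tree: the root label equals the sum of the children's
labels, and every non-root node is valid -/
def IsBeta (t : PTree) : Prop :=
  t.label = (t.children.map PTree.label).sum ∧ ∀ c ∈ t.children, PTree.IsBetaSub c

end Beta10

/-!
Reversal turns the classical pattern 2-4-1-3 into 3-1-4-2 and the barred pattern 4-1-3̄-5-2
into 2-5-3̄-1-4, so it suffices to show that a permutation avoids the dashed pattern 2-41-3 iff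
every occurrence of 2-4-1-3 has a `3̄` between its `4` and its `1`. An occurrence of 2-41-3 is a
2-4-1-3 whose `4` and `1` are adjacent, leaving no room for a `3̄`. Conversely, if 2-41-3 is
avoided, the letter right after the `4` of a 2-4-1-3 can neither be the `1` nor drop below the
`2`; so it is either a `3̄` or a larger `4` closer to the `1`, and induction on the gap applies.
-/

namespace Beta10

/-- `l` avoids the barred pattern 2-5-3̄-1-4, the reverse of 4-1-3̄-5-2. -/
def Filled2413 (l : List ℕ) : Prop :=
  ∀ i j k m, i < j → j < k → k < m → m < l.length →
    l.getD k 0 < l.getD i 0 → l.getD i 0 < l.getD m 0 → l.getD m 0 < l.getD j 0 →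
    ∃ p, j < p ∧ p < k ∧ l.getD i 0 < l.getD p 0 ∧ l.getD p 0 < l.getD m 0

theorem getD_ne_getD_of_nodup {l : List ℕ} (hl : l.Nodup) {p q : ℕ} (hp : p < l.length)
    (hq : q < l.length) (hpq : p ≠ q) : l.getD p 0 ≠ l.getD q 0 := by
  rw [List.getD_eq_getElem _ _ hp, List.getD_eq_getElem _ _ hq]
  exact fun h => hpq (hl.getElem_inj_iff.mp h)

theorem exists_filler_of_not_pat2413 {l : List ℕ} (hnd : l.Nodup) (hl : ¬ pat2413 l)
    {i j k m : ℕ} (hij : i < j) (hjk : j < k) (hkm : k < m) (hm : m < l.length)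
    (hki : l.getD k 0 < l.getD i 0) (him : l.getD i 0 < l.getD m 0)
    (hmj : l.getD m 0 < l.getD j 0) :
    ∃ p, j < p ∧ p < k ∧ l.getD i 0 < l.getD p 0 ∧ l.getD p 0 < l.getD m 0 := by
  have hnext : j + 1 ≠ k := fun h => hl ⟨i, j, m, hij, by omega, hm, h ▸ hki, him, hmj⟩
  rcases (getD_ne_getD_of_nodup hnd (p := j + 1) (q := i) (by omega) (by omega) (by omega)).lt_or_gt
    with hlow | hgt
  · exact (hl ⟨i, j, m, hij, by omega, hm, hlow, him, hmj⟩).elim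
  rcases (getD_ne_getD_of_nodup hnd (p := j + 1) (q := m) (by omega) (by omega) (by omega)).lt_or_gt
    with hfill | hhigh
  · exact ⟨j + 1, by omega, by omega, hgt, hfill⟩
  · obtain ⟨p, hjp, hp⟩ :=
      exists_filler_of_not_pat2413 hnd hl (by omega) (by omega) hkm hm hki him hhigh
    exact ⟨p, by omega, hp⟩
termination_by k - j

theorem not_pat2413_iff_filled2413 {l : List ℕ} (hnd : l.Nodup) :
    ¬ pat2413 l ↔ Filled2413 l := by
  refine ⟨fun hl _ _ _ _ ↦ exists_filler_of_not_pat2413 hnd hl, ?_⟩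
  rintro h ⟨i, j, k, hij, hjk, hk, hlow, hik, hkj⟩
  obtain ⟨p, hjp, hpk, -⟩ := h i j (j + 1) k hij (by omega) hjk hk hlow hik hkj
  omega

section Reversal

variable (l : List ℕ)

theorem getD_reverse_of_lt {i : ℕ} (hi : i < l.length) :
    l.reverse.getD i 0 = l.getD (l.length - 1 - i) 0 :=
  congrFun (List.getD_reverse i hi) 0

theorem getD_reverse_length_sub {i : ℕ} (hi : i < l.length) :
    l.reverse.getD (l.length - 1 - i) 0 = l.getD i 0 := by
  rw [getD_reverse_of_lt l (by omega), Nat.sub_sub_self (by omega)]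

theorem exists_2413_reverse_iff_pat3142 :
    (∃ i j k m, i < j ∧ j < k ∧ k < m ∧ m < l.reverse.length ∧
        l.reverse.getD k 0 < l.reverse.getD i 0 ∧
        l.reverse.getD i 0 < l.reverse.getD m 0 ∧
        l.reverse.getD m 0 < l.reverse.getD j 0) ↔ pat3142 l := by
  rw [List.length_reverse]
  constructor
  · rintro ⟨i, j, k, m, hij, hjk, hkm, hm, hki, him, hmj⟩
    simp only [getD_reverse_of_lt l (show i < l.length by omega),
      getD_reverse_of_lt l (show j < l.length by omega),
      getD_reverse_of_lt l (show k < l.length by omega), getD_reverse_of_lt l hm] at hki him hmj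
    exact ⟨_, _, _, _, by omega, by omega, by omega, by omega, hki, him, hmj⟩
  · rintro ⟨i, j, k, m, hij, hjk, hkm, hm, hjm, hmi, hik⟩
    refine ⟨l.length - 1 - m, l.length - 1 - k, l.length - 1 - j, l.length - 1 - i,
      by omega, by omega, by omega, by omega, ?_, ?_, ?_⟩ <;>
    simpa only [getD_reverse_length_sub l (show i < l.length by omega),
      getD_reverse_length_sub l (show j < l.length by omega),
      getD_reverse_length_sub l (show k < l.length by omega), getD_reverse_length_sub l hm]

theorem forall_3142_filled_reverse_iff_filled2413 :
    (∀ i j k m, i < j → j < k → k < m → m < l.reverse.length →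
        l.reverse.getD j 0 < l.reverse.getD m 0 →
        l.reverse.getD m 0 < l.reverse.getD i 0 →
        l.reverse.getD i 0 < l.reverse.getD k 0 →
        ∃ p, j < p ∧ p < k ∧
          l.reverse.getD m 0 < l.reverse.getD p 0 ∧
          l.reverse.getD p 0 < l.reverse.getD i 0) ↔ Filled2413 l := by
  rw [List.length_reverse]
  constructor
  · intro h i j k m hij hjk hkm hm hki him hmj
    have hi : i < l.length := by omega
    have hj : j < l.length := by omega
    have hk : k < l.length := by omega
    obtain ⟨p, hjp, hpk, hp⟩ := h (l.length - 1 - m) (l.length - 1 - k) (l.length - 1 - j)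
      (l.length - 1 - i) (by omega) (by omega) (by omega) (by omega)
      (by rwa [getD_reverse_length_sub l hk, getD_reverse_length_sub l hi])
      (by rwa [getD_reverse_length_sub l hi, getD_reverse_length_sub l hm])
      (by rwa [getD_reverse_length_sub l hm, getD_reverse_length_sub l hj])
    rw [getD_reverse_length_sub l hi, getD_reverse_length_sub l hm,
      getD_reverse_of_lt l (show p < l.length by omega)] at hp
    exact ⟨l.length - 1 - p, by omega, by omega, hp⟩
  · intro h i j k m hij hjk hkm hm hjm hmi hik
    simp only [getD_reverse_of_lt l (show i < l.length by omega),
      getD_reverse_of_lt l (show j < l.length by omega),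
      getD_reverse_of_lt l (show k < l.length by omega), getD_reverse_of_lt l hm] at hjm hmi hik ⊢
    obtain ⟨p, hjp, hpk, hp⟩ :=
      h _ _ _ _ (by omega) (by omega) (by omega) (by omega) hjm hmi hik
    refine ⟨l.length - 1 - p, by omega, by omega, ?_⟩
    rwa [getD_reverse_of_lt l (by omega), Nat.sub_sub_self (by omega)]

end Reversal


/-- A permutation `l` of `{1,…,n}` avoids both 3-1-4-2 and
2-41-3 if and only if its reverse `ρ` (a) avoids the classical pattern
2-4-1-3, and (b) for every occurrence `i < j < k < m` of the classical pattern
3-1-4-2 in `ρ` there is a position `p` with `j < p < k` whose letter lies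
strictly between `ρ_m` and `ρ_i` (the barred pattern 4-1-3̄-5-2). -/
theorem statement_19 (n : ℕ) (l : List ℕ) (hperm : IsPermOf n l) :
    (¬ pat3142 l ∧ ¬ pat2413 l) ↔
      ((¬ ∃ i j k m, i < j ∧ j < k ∧ k < m ∧ m < l.reverse.length ∧
          l.reverse.getD k 0 < l.reverse.getD i 0 ∧
          l.reverse.getD i 0 < l.reverse.getD m 0 ∧
          l.reverse.getD m 0 < l.reverse.getD j 0) ∧
       (∀ i j k m, i < j → j < k → k < m → m < l.reverse.length →
          l.reverse.getD j 0 < l.reverse.getD m 0 →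
          l.reverse.getD m 0 < l.reverse.getD i 0 →
          l.reverse.getD i 0 < l.reverse.getD k 0 →
          ∃ p, j < p ∧ p < k ∧
            l.reverse.getD m 0 < l.reverse.getD p 0 ∧
            l.reverse.getD p 0 < l.reverse.getD i 0)) := by
  have hnd : l.Nodup := hperm.nodup_iff.mpr List.nodup_range'
  rw [exists_2413_reverse_iff_pat3142, forall_3142_filled_reverse_iff_filled2413,
    not_pat2413_iff_filled2413 hnd]

end Beta10
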